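/- arXiv:1906.09273 — 9 statements merged into one kernel-verified Lean document; each statement's English description precedes it below -/
import Mathlib

section
/- Let λ1 ≥ λ2 ≥ λ3 ≥ λ4 ≥ 0 be real numbers with λ1 + λ2 + λ3 + λ4 ≤ 1, and let C = max{0, λ1−λ2−λ3−λ4} and H = max{0, −D}. Then H ≥ C⁴, with equality when λ1 = C and λ2 = λ3 = λ4 = 0. -/
/-!
When `λ1 - λ2 - λ3 - λ4 = C > 0`, the remaining three factors of `-D` are `C + 2(λ3 + λ4)`,
`C + 2(λ2 + λ4)` and `C + 2(λ2 + λ3)`, each at least `C`; hence `-D ≥ C⁴`.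
-/

lemma pow_four_le_mul_mul_mul {R : Type*} [CommSemiring R] [PartialOrder R] [IsOrderedRing R]
    {c x y z : R} (hc : 0 ≤ c) (hx : c ≤ x) (hy : c ≤ y) (hz : c ≤ z) :
    c ^ 4 ≤ c * x * y * z := by
  have hx₀ : 0 ≤ x := hc.trans hx
  have hy₀ : 0 ≤ y := hc.trans hy
  calc c ^ 4 = c * c * c * c := by ring
    _ ≤ c * x * y * z := by gcongr

lemma sub_sub_sub_pow_four_le_neg_disharmony {l1 l2 l3 l4 : ℝ}
    (h2 : 0 ≤ l2) (h3 : 0 ≤ l3) (h4 : 0 ≤ l4) (hpos : 0 ≤ l1 - l2 - l3 - l4) :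
    (l1 - l2 - l3 - l4) ^ 4 ≤
      -((-l1 + l2 + l3 + l4) * (l1 - l2 + l3 + l4) * (l1 + l2 - l3 + l4) * (l1 + l2 + l3 - l4)) := by
  calc (l1 - l2 - l3 - l4) ^ 4
      ≤ (l1 - l2 - l3 - l4) * (l1 - l2 + l3 + l4) * (l1 + l2 - l3 + l4) * (l1 + l2 + l3 - l4) :=
        pow_four_le_mul_mul_mul hpos (by linarith) (by linarith) (by linarith)
    _ = _ := by ring

theorem harmony_ge_concurrence_pow_four_general (l1 l2 l3 l4 : ℝ)
    (h23 : l3 ≤ l2) (h34 : l4 ≤ l3) (h4 : 0 ≤ l4)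
    (C D H : ℝ)
    (hC : C = max 0 (l1 - l2 - l3 - l4))
    (hD : D = (-l1 + l2 + l3 + l4) * (l1 - l2 + l3 + l4) * (l1 + l2 - l3 + l4)
      * (l1 + l2 + l3 - l4))
    (hH : H = max 0 (-D)) :
    C ^ 4 ≤ H ∧ (l1 = C ∧ l2 = 0 ∧ l3 = 0 ∧ l4 = 0 → H = C ^ 4) := by
  subst hH hD
  constructor
  · rcases le_total (l1 - l2 - l3 - l4) 0 with hneg | hpos
    · simp [hC, max_eq_left hneg]
    · rw [hC, max_eq_right hpos]
      exact (sub_sub_sub_pow_four_le_neg_disharmony (by linarith) (by linarith) h4 hpos).trans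
        (le_max_right _ _)
  · rintro ⟨rfl, rfl, rfl, rfl⟩
    rw [max_eq_right (by ring_nf; positivity)]
    ring

/-- With `λ1 ≥ λ2 ≥ λ3 ≥ λ4 ≥ 0`, `λ1+λ2+λ3+λ4 ≤ 1`,
`C = max{0, λ1−λ2−λ3−λ4}`, `H = max{0, −D}`: `H ≥ C⁴`, with equality when
`λ1 = C` and `λ2 = λ3 = λ4 = 0`. -/
theorem harmony_ge_concurrence_pow_four (l1 l2 l3 l4 : ℝ)
    (h12 : l2 ≤ l1) (h23 : l3 ≤ l2) (h34 : l4 ≤ l3) (h4 : 0 ≤ l4)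
    (hsum : l1 + l2 + l3 + l4 ≤ 1)
    (C D H : ℝ)
    (hC : C = max 0 (l1 - l2 - l3 - l4))
    (hD : D = (-l1 + l2 + l3 + l4) * (l1 - l2 + l3 + l4) * (l1 + l2 - l3 + l4)
      * (l1 + l2 + l3 - l4))
    (hH : H = max 0 (-D)) :
    C ^ 4 ≤ H ∧ (l1 = C ∧ l2 = 0 ∧ l3 = 0 ∧ l4 = 0 → H = C ^ 4) :=
  harmony_ge_concurrence_pow_four_general l1 l2 l3 l4 h23 h34 h4 C D H hC hD hH
end

section
/- Let λ1 ≥ λ2 ≥ λ3 ≥ λ4 ≥ 0 be real numbers with λ1 + λ2 + λ3 + λ4 ≤ 1, and let C = max{0, λ1−λ2−λ3−λ4} and H = max{0, −D}. Then H ≤ 1, and H = 1 if and only if C = 1 (equivalently, λ1 = 1 and λ2 = λ3 = λ4 = 0). -/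
/-!
Write `-D = a * x` with `a = λ1 - λ2 - λ3 - λ4` and `x` the product of the other three factors
of `D`. Each of those factors is `Σλ - 2λᵢ` for some `i ≥ 2`, hence lies in `[0, 1]` by the
ordering and `Σλ ≤ 1`; so `x ∈ [0, 1]`, and since also `a ≤ 1` we get `a * x ≤ 1`, with equality
forcing `a = 1`. Finally `a = 1` together with `Σλ ≤ 1` pins the spectrum to `(1, 0, 0, 0)`.
-/

lemma max_eq_iff_of_lt {α : Type*} [LinearOrder α] {a b c : α} (h : a < c) :
    max a b = c ↔ b = c := by
  rw [max_eq_iff]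
  constructor
  · rintro (⟨rfl, -⟩ | ⟨hb, -⟩)
    · exact absurd h (lt_irrefl a)
    · exact hb
  · rintro rfl
    exact Or.inr ⟨rfl, h.le⟩

lemma eq_one_of_mul_eq_one_of_le_one {α : Type*} [MulOneClass α] [Zero α] [PartialOrder α]
    [MulPosMono α] {a b : α} (ha : a ≤ 1) (hb₀ : 0 ≤ b) (hb : b ≤ 1) (hab : a * b = 1) :
    a = 1 := by
  have hb1 : b = 1 := le_antisymm hb (hab ▸ mul_le_of_le_one_left hb₀ ha)
  rwa [hb1, mul_one] at hab

lemma sub_sub_sub_eq_one_iff {l1 l2 l3 l4 : ℝ} (h2 : 0 ≤ l2) (h3 : 0 ≤ l3) (h4 : 0 ≤ l4)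
    (hsum : l1 + l2 + l3 + l4 ≤ 1) :
    l1 - l2 - l3 - l4 = 1 ↔ l1 = 1 ∧ l2 = 0 ∧ l3 = 0 ∧ l4 = 0 := by
  constructor
  · intro h
    refine ⟨by linarith, by linarith, by linarith, by linarith⟩
  · rintro ⟨rfl, rfl, rfl, rfl⟩
    norm_num

lemma mul_mul_mem_unitInterval_of_antitone {l1 l2 l3 l4 : ℝ}
    (h12 : l2 ≤ l1) (h23 : l3 ≤ l2) (h34 : l4 ≤ l3) (h4 : 0 ≤ l4)
    (hsum : l1 + l2 + l3 + l4 ≤ 1) :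
    (l1 - l2 + l3 + l4) * (l1 + l2 - l3 + l4) * (l1 + l2 + l3 - l4) ∈ unitInterval := by
  refine unitInterval.mul_mem (unitInterval.mul_mem ?_ ?_) ?_ <;>
    exact ⟨by linarith, by linarith⟩

/-- With `λ1 ≥ λ2 ≥ λ3 ≥ λ4 ≥ 0`, `λ1+λ2+λ3+λ4 ≤ 1`,
`C = max{0, λ1−λ2−λ3−λ4}`, `H = max{0, −D}`: `H ≤ 1`, and `H = 1 ↔ C = 1`
(equivalently, `λ1 = 1` and `λ2 = λ3 = λ4 = 0`). -/
theorem harmony_le_one (l1 l2 l3 l4 : ℝ)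
    (h12 : l2 ≤ l1) (h23 : l3 ≤ l2) (h34 : l4 ≤ l3) (h4 : 0 ≤ l4)
    (hsum : l1 + l2 + l3 + l4 ≤ 1)
    (C D H : ℝ)
    (hC : C = max 0 (l1 - l2 - l3 - l4))
    (hD : D = (-l1 + l2 + l3 + l4) * (l1 - l2 + l3 + l4) * (l1 + l2 - l3 + l4)
      * (l1 + l2 + l3 - l4))
    (hH : H = max 0 (-D)) :
    H ≤ 1 ∧ (H = 1 ↔ C = 1) ∧ (C = 1 ↔ l1 = 1 ∧ l2 = 0 ∧ l3 = 0 ∧ l4 = 0) := by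
  set a := l1 - l2 - l3 - l4
  set x := (l1 - l2 + l3 + l4) * (l1 + l2 - l3 + l4) * (l1 + l2 + l3 - l4)
  have hnegD : -D = a * x := by rw [hD]; ring
  obtain ⟨hx₀, hx₁⟩ := mul_mul_mem_unitInterval_of_antitone h12 h23 h34 h4 hsum
  have ha : a ≤ 1 := by linarith
  have hCa : C = 1 ↔ a = 1 := hC ▸ max_eq_iff_of_lt zero_lt_one
  have hCspec : C = 1 ↔ l1 = 1 ∧ l2 = 0 ∧ l3 = 0 ∧ l4 = 0 :=
    hCa.trans (sub_sub_sub_eq_one_iff (by linarith) (by linarith) h4 hsum)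
  refine ⟨hH ▸ max_le zero_le_one (hnegD ▸ mul_le_one₀ ha hx₀ hx₁), ⟨fun hH1 => ?_, fun hC1 => ?_⟩,
    hCspec⟩
  · rw [hH, max_eq_iff_of_lt zero_lt_one, hnegD] at hH1
    exact hCa.mpr (eq_one_of_mul_eq_one_of_le_one ha hx₀ hx₁ hH1)
  · obtain ⟨rfl, rfl, rfl, rfl⟩ := hCspec.mp hC1
    rw [hH, hD]
    norm_num
end

section
/- Let λ1 ≥ λ2 ≥ λ3 ≥ λ4 ≥ 0 be real numbers with λ1 + λ2 + λ3 + λ4 ≤ 1, and let C = max{0, λ1−λ2−λ3−λ4} and H = max{0, −D}. Then H ≤ C. -/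
/-! Writing `x = λ1 - λ2 - λ3 - λ4`, the disharmony is `D = -x · p`, where `p` is the product of
the three remaining factors. Each of them is `λ1 ± λ2 ± λ3 ± λ4` with a single minus sign, never
on `λ1`, so by the ordering and `∑ λi ≤ 1` it lies in `[0, 1]`; hence
`max 0 (-D) = max 0 (x · p) ≤ max 0 x`. -/

theorem max_zero_mul_le_max_zero {α : Type*} [Ring α] [LinearOrder α] [IsOrderedRing α]
    {x p : α} (hp : p ∈ Set.Icc 0 1) : max 0 (x * p) ≤ max 0 x :=
  calc max 0 (x * p) = max 0 x * p := by rw [max_mul_of_nonneg _ _ hp.1, zero_mul]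
    _ ≤ max 0 x := mul_le_of_le_one_right (le_max_left _ _) hp.2

/-- With `λ1 ≥ λ2 ≥ λ3 ≥ λ4 ≥ 0`, `λ1+λ2+λ3+λ4 ≤ 1`,
`C = max{0, λ1−λ2−λ3−λ4}`, `H = max{0, −D}`: `H ≤ C`. -/
theorem harmony_le_concurrence (l1 l2 l3 l4 : ℝ)
    (h12 : l2 ≤ l1) (h23 : l3 ≤ l2) (h34 : l4 ≤ l3) (h4 : 0 ≤ l4)
    (hsum : l1 + l2 + l3 + l4 ≤ 1)
    (C D H : ℝ)
    (hC : C = max 0 (l1 - l2 - l3 - l4))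
    (hD : D = (-l1 + l2 + l3 + l4) * (l1 - l2 + l3 + l4) * (l1 + l2 - l3 + l4)
      * (l1 + l2 + l3 - l4))
    (hH : H = max 0 (-D)) :
    H ≤ C := by
  have hA : l1 - l2 + l3 + l4 ∈ unitInterval := ⟨by linarith, by linarith⟩
  have hB : l1 + l2 - l3 + l4 ∈ unitInterval := ⟨by linarith, by linarith⟩
  have hE : l1 + l2 + l3 - l4 ∈ unitInterval := ⟨by linarith, by linarith⟩
  have hnegD : -D = (l1 - l2 - l3 - l4) *
      ((l1 - l2 + l3 + l4) * (l1 + l2 - l3 + l4) * (l1 + l2 + l3 - l4)) := by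
    rw [hD]; ring
  rw [hH, hC, hnegD]
  exact max_zero_mul_le_max_zero (unitInterval.mul_mem (unitInterval.mul_mem hA hB) hE)
end

section
/- Let ρ be a 4×4 positive semidefinite Hermitian complex matrix with trace 1, let ρ̃ = (σy⊗σy) ρ* (σy⊗σy), and suppose λ1, λ2, λ3, λ4 ≥ 0 are real numbers such that λ1², λ2², λ3², λ4² are the eigenvalues of ρ ρ̃ counted with multiplicity (i.e., the characteristic polynomial of ρ ρ̃ is ∏ᵢ(x − λᵢ²)). Then (−λ1+λ2+λ3+λ4)(λ1−λ2+λ3+λ4)(λ1+λ2−λ3+λ4)(λ1+λ2+λ3−λ4) = −2 tr[(ρ ρ̃)²] + (tr(ρ ρ̃))² + 8 det ρ. -/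
open Matrix Kronecker Complex ComplexOrder

/-- The Pauli matrix `σy`. -/
noncomputable def pauliY : Matrix (Fin 2) (Fin 2) ℂ := !![0, -Complex.I; Complex.I, 0]

/-- The spin-flip matrix `σy ⊗ σy` (Kronecker product). -/
noncomputable def sigYY : Matrix (Fin 2 × Fin 2) (Fin 2 × Fin 2) ℂ := pauliY ⊗ₖ pauliY

/-- The spin-flipped matrix `ρ̃ = (σy⊗σy) ρ* (σy⊗σy)`, with `ρ*` the entrywise
complex conjugate of `ρ`. -/
noncomputable def spinFlip (ρ : Matrix (Fin 2 × Fin 2) (Fin 2 × Fin 2) ℂ) :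
    Matrix (Fin 2 × Fin 2) (Fin 2 × Fin 2) ℂ :=
  sigYY * ρ.map (starRingEnd ℂ) * sigYY

/-- The harmony `H(ρ) = max{0, 2 tr[(ρρ̃)²] − (tr(ρρ̃))² − 8 det ρ}` (for a density
matrix `ρ` all the quantities involved are real, so we take real parts). -/
noncomputable def harmony (ρ : Matrix (Fin 2 × Fin 2) (Fin 2 × Fin 2) ℂ) : ℝ :=
  max 0 (2 * ((ρ * spinFlip ρ * (ρ * spinFlip ρ)).trace).re
    - ((ρ * spinFlip ρ).trace.re) ^ 2 - 8 * ρ.det.re)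

/-!
The `λᵢ²` are the roots of the characteristic polynomial of `M = ρρ̃`, so `tr M = Σ λᵢ²`, and
since `t² - M² = (t - M)(t + M)` the characteristic polynomial of `M²` has the roots `λᵢ⁴`, so
`tr M² = Σ λᵢ⁴`. As `det(σy⊗σy) = 1`, `det ρ̃` is the conjugate of `det ρ`, which is real and
nonnegative; hence `(λ₁λ₂λ₃λ₄)² = det M = (det ρ)²` gives `λ₁λ₂λ₃λ₄ = det ρ`. The theorem is then
the polynomial identity `D = -2 Σ λᵢ⁴ + (Σ λᵢ²)² + 8 λ₁λ₂λ₃λ₄`.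
-/

namespace Matrix

open Polynomial

section Charpoly

variable {n K : Type*} [Fintype n] [DecidableEq n] [Field K] [IsAlgClosed K]

theorem trace_eq_sum_of_charpoly_eq {A : Matrix n n K} {s : Multiset K}
    (h : A.charpoly = (s.map fun a => X - C a).prod) : A.trace = s.sum := by
  rw [trace_eq_sum_roots_charpoly, h, roots_multiset_prod_X_sub_C]

theorem det_eq_prod_of_charpoly_eq {A : Matrix n n K} {s : Multiset K}
    (h : A.charpoly = (s.map fun a => X - C a).prod) : A.det = s.prod := by
  rw [det_eq_prod_roots_charpoly, h, roots_multiset_prod_X_sub_C]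

theorem charpoly_mul_self_of_charpoly_eq {A : Matrix n n K} {s : Multiset K}
    (h : A.charpoly = (s.map fun a => X - C a).prod) :
    (A * A).charpoly = ((s.map (· ^ 2)).map fun a => X - C a).prod := by
  have hcard : Fintype.card n = s.card := by
    rw [← charpoly_natDegree_eq_dim A, h, natDegree_multiset_prod_X_sub_C_eq_card]
  refine Polynomial.funext fun z => ?_
  obtain ⟨t, rfl⟩ := IsAlgClosed.exists_pow_nat_eq z (by decide : 0 < 2)
  have hfactor : scalar n (t ^ 2) - A * A = (scalar n t - A) * -(scalar n (-t) - A) := by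
    simp only [map_neg, neg_sub, sub_neg_eq_add, sub_mul, mul_add, sq, map_mul,
      (scalar_commute t (Commute.all t) A).eq]
    abel
  rw [eval_charpoly, hfactor, det_mul, det_neg, ← eval_charpoly, ← eval_charpoly, hcard, h]
  simp only [eval_multiset_prod, Multiset.map_map, Function.comp_def, eval_sub, eval_X, eval_C]
  have hneg : (-1) ^ s.card * (s.map fun a => -t - a).prod = (s.map fun a => t + a).prod := by
    rw [← Multiset.card_map (fun a => -t - a) s, ← Multiset.prod_map_neg, Multiset.map_map]
    exact congrArg _ (Multiset.map_congr rfl fun a _ => by simp only [Function.comp_apply]; ring)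
  rw [hneg, ← Multiset.prod_map_mul]
  congr 1
  exact Multiset.map_congr rfl fun a _ => by ring

end Charpoly

theorem det_sigYY : sigYY.det = 1 := by
  norm_num [sigYY, det_kronecker, pauliY, det_fin_two_of]

theorem det_spinFlip (ρ : Matrix (Fin 2 × Fin 2) (Fin 2 × Fin 2) ℂ) :
    (spinFlip ρ).det = star ρ.det := by
  rw [spinFlip, det_mul, det_mul, det_sigYY, ← RingHom.mapMatrix_apply, ← RingHom.map_det]
  simp

theorem PosSemidef.det_eq_of_det_mul_spinFlip_eq_sq {ρ : Matrix (Fin 2 × Fin 2) (Fin 2 × Fin 2) ℂ}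
    (hρ : ρ.PosSemidef) {d : ℝ} (hd : 0 ≤ d) (h : (ρ * spinFlip ρ).det = (d : ℂ) ^ 2) :
    ρ.det = d := by
  obtain ⟨hr, him⟩ := Complex.nonneg_iff.mp hρ.det_nonneg
  have hdet : (ρ.det.re : ℂ) = ρ.det := Complex.ext rfl (by simp [him])
  rw [det_mul, det_spinFlip, ← hdet, Complex.star_def, Complex.conj_ofReal, ← sq] at h
  rw [← hdet, (sq_eq_sq₀ hr hd).mp (by exact_mod_cast h)]

end Matrix

open Polynomial in
theorem disharmony_eq_trace_formula_general (ρ : Matrix (Fin 2 × Fin 2) (Fin 2 × Fin 2) ℂ)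
    (hpsd : ρ.PosSemidef)
    (l1 l2 l3 l4 : ℝ) (h1 : 0 ≤ l1) (h2 : 0 ≤ l2) (h3 : 0 ≤ l3) (h4 : 0 ≤ l4)
    (heig : (ρ * spinFlip ρ).charpoly =
      (X - C ((l1 : ℂ) ^ 2)) * (X - C ((l2 : ℂ) ^ 2)) * (X - C ((l3 : ℂ) ^ 2))
        * (X - C ((l4 : ℂ) ^ 2))) :
    (((-l1 + l2 + l3 + l4) * (l1 - l2 + l3 + l4) * (l1 + l2 - l3 + l4)
        * (l1 + l2 + l3 - l4) : ℝ) : ℂ)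
      = -2 * (ρ * spinFlip ρ * (ρ * spinFlip ρ)).trace
        + (ρ * spinFlip ρ).trace ^ 2 + 8 * ρ.det := by
  have hM : (ρ * spinFlip ρ).charpoly =
      (({(l1 : ℂ) ^ 2, (l2 : ℂ) ^ 2, (l3 : ℂ) ^ 2, (l4 : ℂ) ^ 2} : Multiset ℂ).map
        fun a => X - C a).prod := by
    rw [heig]
    simp only [Multiset.insert_eq_cons, Multiset.map_cons, Multiset.prod_cons,
      Multiset.map_singleton, Multiset.prod_singleton]
    ring
  have hdet : ρ.det = ((l1 * l2 * l3 * l4 : ℝ) : ℂ) :=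
    hpsd.det_eq_of_det_mul_spinFlip_eq_sq (by positivity) <| by
      rw [det_eq_prod_of_charpoly_eq hM]
      simp only [Multiset.insert_eq_cons, Multiset.prod_cons, Multiset.prod_singleton]
      push_cast
      ring
  rw [trace_eq_sum_of_charpoly_eq (charpoly_mul_self_of_charpoly_eq hM),
    trace_eq_sum_of_charpoly_eq hM, hdet]
  simp only [Multiset.insert_eq_cons, Multiset.map_cons, Multiset.map_singleton,
    Multiset.sum_cons, Multiset.sum_singleton]
  push_cast
  ring

open Polynomial in
/-- For a 2-qubit density matrix `ρ` whose matrix `ρρ̃` has eigenvalues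
`λ1², λ2², λ3², λ4²` (with all `λᵢ ≥ 0`), counted with multiplicity via the
characteristic polynomial, the disharmony expressed in terms of the `λᵢ` equals
`−2 tr[(ρρ̃)²] + (tr(ρρ̃))² + 8 det ρ`. -/
theorem disharmony_eq_trace_formula (ρ : Matrix (Fin 2 × Fin 2) (Fin 2 × Fin 2) ℂ)
    (hpsd : ρ.PosSemidef) (htr : ρ.trace = 1)
    (l1 l2 l3 l4 : ℝ) (h1 : 0 ≤ l1) (h2 : 0 ≤ l2) (h3 : 0 ≤ l3) (h4 : 0 ≤ l4)
    (heig : (ρ * spinFlip ρ).charpoly =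
      (X - C ((l1 : ℂ) ^ 2)) * (X - C ((l2 : ℂ) ^ 2)) * (X - C ((l3 : ℂ) ^ 2))
        * (X - C ((l4 : ℂ) ^ 2))) :
    (((-l1 + l2 + l3 + l4) * (l1 - l2 + l3 + l4) * (l1 + l2 - l3 + l4)
        * (l1 + l2 + l3 - l4) : ℝ) : ℂ)
      = -2 * (ρ * spinFlip ρ * (ρ * spinFlip ρ)).trace
        + (ρ * spinFlip ρ).trace ^ 2 + 8 * ρ.det :=
  disharmony_eq_trace_formula_general ρ hpsd l1 l2 l3 l4 h1 h2 h3 h4 heig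
end

section
/- Let ψ = (a, c, d, b) ∈ ℂ⁴ be a unit vector representing the pure 2-qubit state a|00⟩ + c|01⟩ + d|10⟩ + b|11⟩, and let ψ̃ = (σy⊗σy) ψ*. Then ⟨ψ̃, ψ⟩ = 2(cd − ab), and the 2×2 reduced density matrix ρ_A with entries (ρ_A)₁₁ = |a|²+|c|², (ρ_A)₁₂ = a d̄ + c b̄, (ρ_A)₂₁ = d ā + b c̄, (ρ_A)₂₂ = |d|²+|b|² satisfies 4 det ρ_A = |⟨ψ̃, ψ⟩|². -/
open Matrix Kronecker Complex ComplexOrder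

/-! Arrange the amplitudes of `ψ` as the coefficient matrix `M = !![a, c; d, b]`, so that
`ψ (i, j) = M i j`. Every entry of `σy⊗σy` is a product of two entries of `σy`, hence real,
so `⟨ψ̃, ψ⟩ = ψᵀ (σy⊗σy) ψ`, which is `-2 det M`. On the other hand `ρ_A = M Mᴴ`, so
`det ρ_A = |det M|²`. -/

lemma sigYY_mulVec (v : Fin 2 × Fin 2 → ℂ) :
    sigYY *ᵥ v = fun p => !![-v (1, 1), v (1, 0); v (0, 1), -v (0, 0)] p.1 p.2 := by
  ext ⟨i, j⟩
  fin_cases i <;> fin_cases j <;>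
    simp [sigYY, pauliY, mulVec, dotProduct, Fintype.sum_prod_type, kroneckerMap_apply]

lemma sum_star_sigYY_mulVec_star_mul (M : Matrix (Fin 2) (Fin 2) ℂ) :
    ∑ p, star ((sigYY *ᵥ star fun p => M p.1 p.2) p) * M p.1 p.2 = -2 * M.det := by
  simp only [sigYY_mulVec, Pi.star_apply, RCLike.star_def, of_apply, cons_val', cons_val_fin_one,
    Fintype.sum_prod_type, Fin.sum_univ_two, cons_val_zero, cons_val_one, map_neg,
    RingHomCompTriple.comp_apply, RingHom.id_apply, neg_mul, det_fin_two]
  ring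

lemma mul_conjTranspose_fin_two (a b c d : ℂ) :
    !![a, c; d, b] * (!![a, c; d, b])ᴴ =
      !![((‖a‖ ^ 2 + ‖c‖ ^ 2 : ℝ) : ℂ), a * star d + c * star b;
        d * star a + b * star c, ((‖d‖ ^ 2 + ‖b‖ ^ 2 : ℝ) : ℂ)] := by
  ext i j
  fin_cases i <;> fin_cases j <;> simp [Matrix.mul_apply, Fin.sum_univ_two, ← mul_conj']

lemma det_mul_conjTranspose {n : Type*} [Fintype n] [DecidableEq n] (M : Matrix n n ℂ) :
    (M * Mᴴ).det = ((‖M.det‖ ^ 2 : ℝ) : ℂ) := by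
  rw [det_mul, det_conjTranspose, Complex.ofReal_pow, ← mul_conj']
  rfl

theorem inner_spinFlip_and_det_reduced_general (a b c d : ℂ)
    (ψ : Fin 2 × Fin 2 → ℂ) (hψ : ψ = fun p => !![a, c; d, b] p.1 p.2)
    (ψt : Fin 2 × Fin 2 → ℂ) (hψt : ψt = sigYY.mulVec (star ψ))
    (ip : ℂ) (hip : ip = ∑ p, star (ψt p) * ψ p)
    (ρA : Matrix (Fin 2) (Fin 2) ℂ)
    (hρA : ρA = !![((‖a‖ ^ 2 + ‖c‖ ^ 2 : ℝ) : ℂ),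
                    a * star d + c * star b;
                    d * star a + b * star c,
                    ((‖d‖ ^ 2 + ‖b‖ ^ 2 : ℝ) : ℂ)]) :
    ip = 2 * (c * d - a * b) ∧ 4 * ρA.det = ((‖ip‖ : ℝ) ^ 2 : ℂ) := by
  have hip_det : ip = -2 * (!![a, c; d, b]).det := by
    rw [hip, hψt, hψ, sum_star_sigYY_mulVec_star_mul]
  refine ⟨by rw [hip_det, det_fin_two_of]; ring, ?_⟩
  rw [hρA, ← mul_conjTranspose_fin_two, det_mul_conjTranspose, hip_det, norm_mul, norm_neg,
    Complex.norm_two]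
  push_cast
  ring

/-- For the pure 2-qubit state `ψ = a|00⟩ + c|01⟩ + d|10⟩ + b|11⟩`
(a unit vector), with `ψ̃ = (σy⊗σy) ψ*`, one has `⟨ψ̃, ψ⟩ = 2(cd − ab)`, and the
reduced density matrix `ρ_A` satisfies `4 det ρ_A = |⟨ψ̃, ψ⟩|²`. -/
theorem inner_spinFlip_and_det_reduced (a b c d : ℂ)
    (hunit : Complex.normSq a + Complex.normSq b + Complex.normSq c
      + Complex.normSq d = 1)
    (ψ : Fin 2 × Fin 2 → ℂ) (hψ : ψ = fun p => !![a, c; d, b] p.1 p.2)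
    (ψt : Fin 2 × Fin 2 → ℂ) (hψt : ψt = sigYY.mulVec (star ψ))
    (ip : ℂ) (hip : ip = ∑ p, star (ψt p) * ψ p)
    (ρA : Matrix (Fin 2) (Fin 2) ℂ)
    (hρA : ρA = !![((‖a‖ ^ 2 + ‖c‖ ^ 2 : ℝ) : ℂ),
                    a * star d + c * star b;
                    d * star a + b * star c,
                    ((‖d‖ ^ 2 + ‖b‖ ^ 2 : ℝ) : ℂ)]) :
    ip = 2 * (c * d - a * b) ∧ 4 * ρA.det = ((‖ip‖ : ℝ) ^ 2 : ℂ) :=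
  inner_spinFlip_and_det_reduced_general a b c d ψ hψ ψt hψt ip hip ρA hρA
end

section
/- Let ρ be a 4×4 positive semidefinite Hermitian complex matrix with trace 1, and let U_A and U_B be unitary 2×2 complex matrices. Define ρ' = (U_A⊗U_B) ρ (U_A⊗U_B)†. Then the harmony is invariant: max{0, 2 tr[(ρ'ρ̃')²] − (tr(ρ'ρ̃'))² − 8 det ρ'} = max{0, 2 tr[(ρρ̃)²] − (tr(ρρ̃))² − 8 det ρ}, where ρ̃ = (σy⊗σy) ρ* (σy⊗σy) and ρ̃' = (σy⊗σy) ρ'* (σy⊗σy). -/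
open Matrix Kronecker Complex ComplexOrder

/-!
For a 2×2 matrix `A`, `σy A* σy = (adj A)ᴴ`; for `U` unitary, `adj U = det U • Uᴴ`, so
`σy U* σy = conj (det U) • U`. Hence the spin flip, which is multiplicative and commutes with `ᴴ`,
sends `W = U_A ⊗ U_B` to a unimodular multiple of itself, and the flip of `W ρ Wᴴ` is `W ρ̃ Wᴴ`.
Then `ρ' ρ̃' = W (ρ ρ̃) Wᴴ`, and all traces and the determinant in the harmony are invariant
under unitary conjugation.
-/

namespace Matrix

variable {n α : Type*} [Fintype n] [DecidableEq n] [CommRing α] [StarRing α]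
  {W : Matrix n n α}

theorem adjugate_eq_det_smul_conjTranspose (hW : W ∈ unitaryGroup n α) :
    W.adjugate = W.det • Wᴴ := by
  rw [← Matrix.mul_one W.adjugate, ← (mem_unitaryGroup_iff.mp hW), ← Matrix.mul_assoc,
    adjugate_mul, smul_mul, Matrix.one_mul, star_eq_conjTranspose]

theorem conj_mul_conj_of_mem_unitaryGroup (hW : W ∈ unitaryGroup n α) (A B : Matrix n n α) :
    W * A * Wᴴ * (W * B * Wᴴ) = W * (A * B) * Wᴴ := by
  have hWW : Wᴴ * W = 1 := mem_unitaryGroup_iff'.mp hW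
  simp only [Matrix.mul_assoc, ← Matrix.mul_assoc Wᴴ, hWW, Matrix.one_mul]

theorem trace_conj_of_mem_unitaryGroup (hW : W ∈ unitaryGroup n α) (A : Matrix n n α) :
    (W * A * Wᴴ).trace = A.trace := by
  have hWW : Wᴴ * W = 1 := mem_unitaryGroup_iff'.mp hW
  rw [trace_mul_cycle, hWW, Matrix.one_mul]

theorem det_conj_of_mem_unitaryGroup (hW : W ∈ unitaryGroup n α) (A : Matrix n n α) :
    (W * A * Wᴴ).det = A.det :=
  det_conj_of_mul_eq_one (mem_unitaryGroup_iff.mp hW) (mem_unitaryGroup_iff'.mp hW)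

end Matrix

theorem pauliY_mul_pauliY : pauliY * pauliY = 1 := by
  ext i j
  fin_cases i <;> fin_cases j <;> simp [pauliY, mul_apply]

theorem pauliY_conjTranspose : pauliYᴴ = pauliY := by
  ext i j
  fin_cases i <;> fin_cases j <;> simp [pauliY]

theorem pauliY_mul_map_conj_mul_pauliY (A : Matrix (Fin 2) (Fin 2) ℂ) :
    pauliY * A.map (starRingEnd ℂ) * pauliY = A.adjugateᴴ := by
  ext i j
  fin_cases i <;> fin_cases j <;>
    simp [pauliY, mul_apply, adjugate_fin_two, vecMul, dotProduct] <;>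
    ring_nf <;> simp

theorem sigYY_mul_sigYY : sigYY * sigYY = 1 := by
  rw [sigYY, ← mul_kronecker_mul, pauliY_mul_pauliY, one_kronecker_one]

theorem sigYY_conjTranspose : sigYYᴴ = sigYY := by
  rw [sigYY, conjTranspose_kronecker, pauliY_conjTranspose]

theorem spinFlip_mul (A B : Matrix (Fin 2 × Fin 2) (Fin 2 × Fin 2) ℂ) :
    spinFlip (A * B) = spinFlip A * spinFlip B := by
  simp only [spinFlip, Matrix.map_mul, Matrix.mul_assoc, ← Matrix.mul_assoc sigYY sigYY,
    sigYY_mul_sigYY, Matrix.one_mul]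

theorem spinFlip_conjTranspose (A : Matrix (Fin 2 × Fin 2) (Fin 2 × Fin 2) ℂ) :
    spinFlip Aᴴ = (spinFlip A)ᴴ := by
  rw [spinFlip, spinFlip, conjTranspose_mul, conjTranspose_mul, sigYY_conjTranspose,
    Matrix.mul_assoc, conjTranspose_map (starRingEnd ℂ) (fun _ => rfl)]

theorem spinFlip_kronecker (A B : Matrix (Fin 2) (Fin 2) ℂ) :
    spinFlip (A ⊗ₖ B) = (A.adjugate ⊗ₖ B.adjugate)ᴴ := by
  have hmap : (A ⊗ₖ B).map (starRingEnd ℂ) = A.map (starRingEnd ℂ) ⊗ₖ B.map (starRingEnd ℂ) := by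
    ext; simp
  rw [spinFlip, sigYY, hmap, ← mul_kronecker_mul, ← mul_kronecker_mul,
    pauliY_mul_map_conj_mul_pauliY, pauliY_mul_map_conj_mul_pauliY, conjTranspose_kronecker]

theorem spinFlip_kronecker_of_mem_unitaryGroup {UA UB : Matrix (Fin 2) (Fin 2) ℂ}
    (hUA : UA ∈ unitaryGroup (Fin 2) ℂ) (hUB : UB ∈ unitaryGroup (Fin 2) ℂ) :
    spinFlip (UA ⊗ₖ UB) = star (UA.det * UB.det) • (UA ⊗ₖ UB) := by
  rw [spinFlip_kronecker, adjugate_eq_det_smul_conjTranspose hUA,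
    adjugate_eq_det_smul_conjTranspose hUB, smul_kronecker, kronecker_smul, smul_smul,
    conjTranspose_smul, conjTranspose_kronecker, conjTranspose_conjTranspose,
    conjTranspose_conjTranspose, mul_comm]

theorem spinFlip_conj_of_spinFlip_eq_smul {W : Matrix (Fin 2 × Fin 2) (Fin 2 × Fin 2) ℂ}
    {c : ℂ} (hc : c ∈ unitary ℂ) (hWc : spinFlip W = c • W)
    (ρ : Matrix (Fin 2 × Fin 2) (Fin 2 × Fin 2) ℂ) :
    spinFlip (W * ρ * Wᴴ) = W * spinFlip ρ * Wᴴ := by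
  rw [spinFlip_mul, spinFlip_mul, spinFlip_conjTranspose, hWc, conjTranspose_smul, smul_mul_assoc,
    mul_smul_comm, smul_mul_assoc, smul_smul, Unitary.star_mul_self_of_mem hc, one_smul]

theorem harmony_conj_of_spinFlip_eq_smul {W : Matrix (Fin 2 × Fin 2) (Fin 2 × Fin 2) ℂ}
    (hW : W ∈ unitaryGroup (Fin 2 × Fin 2) ℂ) {c : ℂ} (hc : c ∈ unitary ℂ)
    (hWc : spinFlip W = c • W) (ρ : Matrix (Fin 2 × Fin 2) (Fin 2 × Fin 2) ℂ) :
    harmony (W * ρ * Wᴴ) = harmony ρ := by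
  have hprod : W * ρ * Wᴴ * spinFlip (W * ρ * Wᴴ) = W * (ρ * spinFlip ρ) * Wᴴ := by
    rw [spinFlip_conj_of_spinFlip_eq_smul hc hWc, conj_mul_conj_of_mem_unitaryGroup hW]
  simp only [harmony, hprod, conj_mul_conj_of_mem_unitaryGroup hW,
    trace_conj_of_mem_unitaryGroup hW, det_conj_of_mem_unitaryGroup hW]

theorem harmony_local_unitary_invariant_general (ρ : Matrix (Fin 2 × Fin 2) (Fin 2 × Fin 2) ℂ)
    (UA UB : Matrix (Fin 2) (Fin 2) ℂ)
    (hUA : UA ∈ Matrix.unitaryGroup (Fin 2) ℂ)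
    (hUB : UB ∈ Matrix.unitaryGroup (Fin 2) ℂ) :
    harmony ((UA ⊗ₖ UB) * ρ * (UA ⊗ₖ UB)ᴴ) = harmony ρ :=
  harmony_conj_of_spinFlip_eq_smul (kronecker_mem_unitary hUA hUB)
    (Unitary.star_mem (mul_mem (det_of_mem_unitary hUA) (det_of_mem_unitary hUB)))
    (spinFlip_kronecker_of_mem_unitaryGroup hUA hUB) ρ

/-- The harmony is invariant under local unitary transformations
`ρ ↦ (U_A⊗U_B) ρ (U_A⊗U_B)†`. -/
theorem harmony_local_unitary_invariant (ρ : Matrix (Fin 2 × Fin 2) (Fin 2 × Fin 2) ℂ)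
    (hpsd : ρ.PosSemidef) (htr : ρ.trace = 1)
    (UA UB : Matrix (Fin 2) (Fin 2) ℂ)
    (hUA : UA ∈ Matrix.unitaryGroup (Fin 2) ℂ)
    (hUB : UB ∈ Matrix.unitaryGroup (Fin 2) ℂ) :
    harmony ((UA ⊗ₖ UB) * ρ * (UA ⊗ₖ UB)ᴴ) = harmony ρ :=
  harmony_local_unitary_invariant_general ρ UA UB hUA hUB
end

section
/- Fix a real number x with 0 ≤ x ≤ 1. In the basis {|00⟩, |01⟩, |10⟩, |11⟩}, define the 4×4 density matrices ρ₊ and ρ₋ whose only nonzero entries are the (|00⟩,|00⟩) entry (1±x)/2, the (|11⟩,|11⟩) entry (1∓x)/2, and the (|00⟩,|11⟩) and (|11⟩,|00⟩) entries √(1−x²)/2; and let ρ = (1/2)ρ₊ + (1/2)ρ₋. Then H(ρ₊) = H(ρ₋) = (1−x²)² and H(ρ) = 1−x², so that H(ρ) ≥ (1/2)H(ρ₊) + (1/2)H(ρ₋), with strict inequality for 0 < x < 1; hence the harmony is not a convex function of the density matrix. -/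
/-! The three states are supported on the span of `|00⟩, |11⟩`, on which `σy ⊗ σy` acts as the
swap `|00⟩ ↔ |11⟩` (up to an overall sign that cancels). For `ρ = A` on that span, `ρ̃` is the
entrywise conjugate of `A` with both indices reversed, `det ρ = 0`, and the harmony reduces to
`2 tr K² − (tr K)²` for the `2 × 2` matrix `K = A Ã`. For `A = [[a, c], [c, b]]` real this is
`16 a b c²`, i.e. `4 p (1 − p) (1 − x²)` for our states, with `p = (1 ± x)/2` for `ρ±` and
`p = 1/2` for their midpoint `ρ`. -/

open Matrix Kronecker Complex ComplexOrder

/-- The density matrix with `(|00⟩,|00⟩)` entry `p`, `(|11⟩,|11⟩)` entry `1 − p`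
(here `p = (1±x)/2`), and `(|00⟩,|11⟩)`, `(|11⟩,|00⟩)` entries `√(1−x²)/2`. -/
noncomputable def rhoPM (x : ℝ) (p : ℝ) : Matrix (Fin 2 × Fin 2) (Fin 2 × Fin 2) ℂ :=
  Matrix.of fun i j =>
    if i = (0, 0) ∧ j = (0, 0) then ((p : ℝ) : ℂ)
    else if i = (1, 1) ∧ j = (1, 1) then ((1 - p : ℝ) : ℂ)
    else if (i = (0, 0) ∧ j = (1, 1)) ∨ (i = (1, 1) ∧ j = (0, 0)) then
      ((Real.sqrt (1 - x ^ 2) / 2 : ℝ) : ℂ)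
    else 0

def evenBlock (A : Matrix (Fin 2) (Fin 2) ℂ) : Matrix (Fin 2 × Fin 2) (Fin 2 × Fin 2) ℂ :=
  Matrix.of fun i j => if i.1 = i.2 ∧ j.1 = j.2 then A i.1 j.1 else 0

section evenBlock

variable (A B : Matrix (Fin 2) (Fin 2) ℂ)

lemma evenBlock_mul : evenBlock A * evenBlock B = evenBlock (A * B) := by
  ext ⟨i, j⟩ ⟨k, l⟩
  fin_cases i <;> fin_cases j <;> fin_cases k <;> fin_cases l <;>
    simp [evenBlock, mul_apply, Fintype.sum_prod_type, Fin.sum_univ_two]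

lemma trace_evenBlock : (evenBlock A).trace = A.trace := by
  simp [evenBlock, trace, Fintype.sum_prod_type, Fin.sum_univ_two]

lemma det_evenBlock : (evenBlock A).det = 0 :=
  det_eq_zero_of_row_eq_zero (0, 1) fun j => by simp [evenBlock]

lemma spinFlip_evenBlock :
    spinFlip (evenBlock A) = evenBlock ((A.map (starRingEnd ℂ)).submatrix Fin.rev Fin.rev) := by
  ext ⟨i, j⟩ ⟨k, l⟩
  fin_cases i <;> fin_cases j <;> fin_cases k <;> fin_cases l <;>
    simp [spinFlip, sigYY, pauliY, evenBlock, mul_apply, Fintype.sum_prod_type, Fin.sum_univ_two]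

end evenBlock

lemma rhoPM_eq_evenBlock (x p : ℝ) :
    rhoPM x p =
      evenBlock !![(p : ℂ), (√(1 - x ^ 2) / 2 : ℝ); (√(1 - x ^ 2) / 2 : ℝ), (1 - p : ℝ)] := by
  ext ⟨i, j⟩ ⟨k, l⟩
  fin_cases i <;> fin_cases j <;> fin_cases k <;> fin_cases l <;> simp [rhoPM, evenBlock]

lemma harmony_evenBlock (A : Matrix (Fin 2) (Fin 2) ℂ) :
    let K := A * (A.map (starRingEnd ℂ)).submatrix Fin.rev Fin.rev
    harmony (evenBlock A) = max 0 (2 * (K * K).trace.re - K.trace.re ^ 2) := by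
  simp only [harmony, spinFlip_evenBlock, evenBlock_mul, trace_evenBlock, det_evenBlock,
    Complex.zero_re, mul_zero, sub_zero]

lemma harmony_evenBlock_real_symm (a b c : ℝ) :
    harmony (evenBlock !![(a : ℂ), c; c, b]) = max 0 (16 * a * b * c ^ 2) := by
  have hK : !![(a : ℂ), c; c, b] *
      (!![(a : ℂ), c; c, b].map (starRingEnd ℂ)).submatrix Fin.rev Fin.rev =
        !![((a * b + c ^ 2 : ℝ) : ℂ), (2 * a * c : ℝ); (2 * b * c : ℝ), (a * b + c ^ 2 : ℝ)] := by
    ext i j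
    fin_cases i <;> fin_cases j <;> simp [mul_apply, Fin.sum_univ_two] <;> ring
  rw [harmony_evenBlock, hK]
  simp only [trace_fin_two_of, mul_fin_two]
  norm_cast
  congr 1
  ring

lemma harmony_rhoPM (x p : ℝ) (hx : x ^ 2 ≤ 1) :
    harmony (rhoPM x p) = max 0 (4 * p * (1 - p) * (1 - x ^ 2)) := by
  have hc : (√(1 - x ^ 2) / 2) ^ 2 = (1 - x ^ 2) / 4 := by
    rw [div_pow, Real.sq_sqrt (by linarith)]; norm_num
  rw [rhoPM_eq_evenBlock, harmony_evenBlock_real_symm, hc]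
  ring_nf

lemma midpoint_rhoPM (x p q : ℝ) :
    (1 / 2 : ℂ) • rhoPM x p + (1 / 2 : ℂ) • rhoPM x q = rhoPM x ((p + q) / 2) := by
  ext i j
  simp only [rhoPM, Matrix.add_apply, Matrix.smul_apply, of_apply, smul_eq_mul]
  split_ifs <;> push_cast <;> ring

/-- For `0 ≤ x ≤ 1`, the states `ρ₊`, `ρ₋` (with diagonal entries
`(1±x)/2`, `(1∓x)/2` and off-diagonal entries `√(1−x²)/2` in the `|00⟩,|11⟩` block)
and `ρ = ρ₊/2 + ρ₋/2` satisfy `H(ρ₊) = H(ρ₋) = (1−x²)²` and `H(ρ) = 1−x²`, so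
`H(ρ) ≥ H(ρ₊)/2 + H(ρ₋)/2`, strictly for `0 < x < 1`: harmony is not convex. -/
theorem harmony_not_convex (x : ℝ) (hx0 : 0 ≤ x) (hx1 : x ≤ 1)
    (ρp ρm ρ : Matrix (Fin 2 × Fin 2) (Fin 2 × Fin 2) ℂ)
    (hρp : ρp = rhoPM x ((1 + x) / 2))
    (hρm : ρm = rhoPM x ((1 - x) / 2))
    (hρ : ρ = (1 / 2 : ℂ) • ρp + (1 / 2 : ℂ) • ρm) :
    harmony ρp = (1 - x ^ 2) ^ 2 ∧
    harmony ρm = (1 - x ^ 2) ^ 2 ∧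
    harmony ρ = 1 - x ^ 2 ∧
    (1 / 2) * harmony ρp + (1 / 2) * harmony ρm ≤ harmony ρ ∧
    (0 < x → x < 1 → (1 / 2) * harmony ρp + (1 / 2) * harmony ρm < harmony ρ) := by
  have hx2 : x ^ 2 ≤ 1 := pow_le_one₀ hx0 hx1
  have hHp : harmony ρp = (1 - x ^ 2) ^ 2 := by
    rw [hρp, harmony_rhoPM x _ hx2, max_eq_right (by nlinarith)]; ring
  have hHm : harmony ρm = (1 - x ^ 2) ^ 2 := by
    rw [hρm, harmony_rhoPM x _ hx2, max_eq_right (by nlinarith)]; ring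
  have hH : harmony ρ = 1 - x ^ 2 := by
    rw [hρ, hρp, hρm, midpoint_rhoPM, harmony_rhoPM x _ hx2, max_eq_right (by nlinarith)]; ring
  refine ⟨hHp, hHm, hH, ?_, fun hx0' hx1' => ?_⟩ <;> rw [hHp, hHm, hH]
  · linarith [sq_le (sub_nonneg.2 hx2) (by nlinarith : 1 - x ^ 2 ≤ 1)]
  · linarith [pow_lt_self_of_lt_one₀ (by nlinarith : 0 < 1 - x ^ 2) (by nlinarith : 1 - x ^ 2 < 1)
      one_lt_two]
end

section
/- Let ψ ∈ ℂ²⊗ℂ²⊗ℂ² ≅ ℂ⁸ be a unit vector describing a pure state of three qubits X, Y, Z, with components ψ_{ijk} (i, j, k ∈ {0,1}). Define the reduced density matrices entrywise by (ρ_XY)_{(i,j),(i',j')} = Σ_k ψ_{ijk} ψ*_{i'j'k}, (ρ_XZ)_{(i,k),(i',k')} = Σ_j ψ_{ijk} ψ*_{i'jk'}, and (ρ_X)_{i,i'} = Σ_{j,k} ψ_{ijk} ψ*_{i'jk}. Then the monogamy inequality H(ρ_XY) + H(ρ_XZ) ≤ (4 det ρ_X)² holds, where H is the harmony of a 2-qubit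 density matrix. -/
open Matrix Kronecker Complex ComplexOrder

/-!
Write `ρ_XY = V Vᴴ`, where `V` is the `4 × 2` matrix of amplitudes `ψ_{ijk}` with rows `(i,j)` and
columns `k`, and let `Q = Vᵀ (σy⊗σy) V`, a symmetric `2 × 2` matrix. By cyclicity of the trace,
`tr(ρρ̃) = tr(QᴴQ) =: t` and `tr((ρρ̃)²) = tr((QᴴQ)²) = t² − 2|det Q|²`, while `det ρ = 0` because
`ρ` has rank at most `2`. Hence `H(ρ_XY) ≤ t_XY²`, and likewise `H(ρ_XZ) ≤ t_XZ²`. Finally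
`t_XY + t_XZ = 4 det ρ_X` (the identity behind the Coffman–Kundu–Wootters inequality), so
`H(ρ_XY) + H(ρ_XZ) ≤ t_XY² + t_XZ² ≤ (t_XY + t_XZ)² = (4 det ρ_X)²`.
-/

lemma trace_mul_self_fin_two {R : Type*} [CommRing R] (M : Matrix (Fin 2) (Fin 2) R) :
    (M * M).trace = M.trace ^ 2 - 2 * M.det := by
  simp only [trace_fin_two, mul_apply, Fin.sum_univ_two, det_fin_two]
  ring

lemma det_mul_eq_zero_of_card_lt {K m n : Type*} [Field K] [Fintype m] [Fintype n]
    [DecidableEq m] (A : Matrix m n K) (B : Matrix n m K)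
    (h : Fintype.card n < Fintype.card m) : (A * B).det = 0 := by
  by_contra hdet
  have hrank := rank_of_isUnit _ ((isUnit_iff_isUnit_det _).2 (isUnit_iff_ne_zero.2 hdet))
  have := (rank_mul_le_left A B).trans A.rank_le_card_width
  omega

section conjTranspose_mul_self

variable {m n : Type*} [Fintype m] [Fintype n] (A : Matrix m n ℂ)

lemma trace_conjTranspose_mul_self_eq_re : (Aᴴ * A).trace = ((Aᴴ * A).trace.re : ℂ) :=
  Complex.eq_re_of_ofReal_le (r := 0) <| by
    simpa using (posSemidef_conjTranspose_mul_self A).trace_nonneg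

lemma re_trace_conjTranspose_mul_self_nonneg : 0 ≤ (Aᴴ * A).trace.re :=
  (Complex.nonneg_iff.1 (posSemidef_conjTranspose_mul_self A).trace_nonneg).1

end conjTranspose_mul_self

lemma of_sum_mul_star {m n : Type*} [Fintype n] (v : m → n → ℂ) :
    (of fun p q => ∑ k, v p k * star (v q k)) = of v * (of v)ᴴ := by
  ext p q
  simp [mul_apply]

lemma pauliY_map_conj : pauliY.map (starRingEnd ℂ) = -pauliY := by
  ext i j
  fin_cases i <;> fin_cases j <;> simp [pauliY]

lemma pauliY_transpose : pauliYᵀ = -pauliY := by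
  ext i j
  fin_cases i <;> fin_cases j <;> simp [pauliY]

lemma sigYY_apply (p q : Fin 2 × Fin 2) : sigYY p q = pauliY p.1 q.1 * pauliY p.2 q.2 := rfl

lemma sigYY_map_conj : sigYY.map (starRingEnd ℂ) = sigYY := by
  ext p q
  have h := congrFun₂ pauliY_map_conj
  simp only [map_apply, sigYY_apply, map_mul] at h ⊢
  simp [h]

lemma sigYY_transpose : sigYYᵀ = sigYY := by
  ext p q
  rw [transpose_apply, sigYY_apply, sigYY_apply, ← transpose_apply pauliY,
    ← transpose_apply pauliY, pauliY_transpose]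
  simp

section spinFlipGram

variable {n : Type*}

noncomputable def spinFlipGram (V : Matrix (Fin 2 × Fin 2) n ℂ) : Matrix n n ℂ :=
  Vᵀ * sigYY * V

lemma spinFlipGram_apply (V : Matrix (Fin 2 × Fin 2) n ℂ) (k l : n) :
    spinFlipGram V k l = V (0, 1) k * V (1, 0) l + V (1, 0) k * V (0, 1) l
      - V (0, 0) k * V (1, 1) l - V (1, 1) k * V (0, 0) l := by
  simp only [spinFlipGram, mul_apply, transpose_apply, sigYY_apply, pauliY, of_apply, cons_val',
    cons_val_fin_one, Fintype.sum_prod_type, Fin.sum_univ_two, cons_val_zero, cons_val_one,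
    mul_zero, zero_add, mul_neg, add_zero, zero_mul, I_mul_I, mul_one, neg_mul, neg_zero, neg_neg]
  ring

lemma spinFlipGram_transpose (V : Matrix (Fin 2 × Fin 2) n ℂ) :
    (spinFlipGram V)ᵀ = spinFlipGram V := by
  simp [spinFlipGram, transpose_mul, sigYY_transpose, Matrix.mul_assoc]

lemma spinFlipGram_conjTranspose (V : Matrix (Fin 2 × Fin 2) n ℂ) :
    (spinFlipGram V)ᴴ = Vᴴ * sigYY * V.map (starRingEnd ℂ) := by
  rw [conjTranspose, spinFlipGram_transpose, spinFlipGram]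
  simp [Matrix.map_mul, sigYY_map_conj, conjTranspose]

variable [Fintype n]

lemma mul_conjTranspose_mul_spinFlip (V : Matrix (Fin 2 × Fin 2) n ℂ) :
    V * Vᴴ * spinFlip (V * Vᴴ) = V * ((spinFlipGram V)ᴴ * Vᵀ * sigYY) := by
  have hconj : Vᴴ.map (starRingEnd ℂ) = Vᵀ := by ext; simp
  rw [spinFlip, spinFlipGram_conjTranspose, Matrix.map_mul, hconj]
  simp only [Matrix.mul_assoc]

lemma trace_mul_spinFlip (V : Matrix (Fin 2 × Fin 2) n ℂ) :
    (V * Vᴴ * spinFlip (V * Vᴴ)).trace = ((spinFlipGram V)ᴴ * spinFlipGram V).trace := by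
  rw [mul_conjTranspose_mul_spinFlip, trace_mul_comm, spinFlipGram]
  simp only [Matrix.mul_assoc]

lemma trace_mul_spinFlip_sq (V : Matrix (Fin 2 × Fin 2) n ℂ) :
    (V * Vᴴ * spinFlip (V * Vᴴ) * (V * Vᴴ * spinFlip (V * Vᴴ))).trace
      = ((spinFlipGram V)ᴴ * spinFlipGram V * ((spinFlipGram V)ᴴ * spinFlipGram V)).trace := by
  rw [mul_conjTranspose_mul_spinFlip, Matrix.mul_assoc, trace_mul_comm, spinFlipGram]
  simp only [Matrix.mul_assoc]

end spinFlipGram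

lemma harmony_mul_conjTranspose_le (V : Matrix (Fin 2 × Fin 2) (Fin 2) ℂ) :
    harmony (V * Vᴴ) ≤ ((spinFlipGram V)ᴴ * spinFlipGram V).trace.re ^ 2 := by
  set Q := spinFlipGram V
  set t := (Qᴴ * Q).trace.re
  have htrace_sq : (Qᴴ * Q * (Qᴴ * Q)).trace.re = t ^ 2 - 2 * Complex.normSq Q.det := by
    rw [trace_mul_self_fin_two, trace_conjTranspose_mul_self_eq_re, det_mul, det_conjTranspose,
      Complex.star_def, ← Complex.normSq_eq_conj_mul_self]
    norm_cast
  have hdet : (V * Vᴴ).det = 0 := det_mul_eq_zero_of_card_lt _ _ (by simp)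
  rw [harmony, trace_mul_spinFlip_sq, trace_mul_spinFlip, htrace_sq, hdet, Complex.zero_re]
  exact max_le (by positivity) (by nlinarith [Complex.normSq_nonneg Q.det])

def amplitudesXY (ψ : Fin 2 × Fin 2 × Fin 2 → ℂ) : Matrix (Fin 2 × Fin 2) (Fin 2) ℂ :=
  of fun p k => ψ (p.1, p.2, k)

def amplitudesXZ (ψ : Fin 2 × Fin 2 × Fin 2 → ℂ) : Matrix (Fin 2 × Fin 2) (Fin 2) ℂ :=
  of fun p j => ψ (p.1, j, p.2)

lemma trace_spinFlipGram_amplitudesXY_add_amplitudesXZ (ψ : Fin 2 × Fin 2 × Fin 2 → ℂ) :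
    ((spinFlipGram (amplitudesXY ψ))ᴴ * spinFlipGram (amplitudesXY ψ)).trace
      + ((spinFlipGram (amplitudesXZ ψ))ᴴ * spinFlipGram (amplitudesXZ ψ)).trace
      = 4 * (of fun i i' => ∑ j, ∑ k, ψ (i, j, k) * star (ψ (i', j, k))).det := by
  simp only [trace_fin_two, det_fin_two, mul_apply, conjTranspose_apply, spinFlipGram_apply,
    amplitudesXY, amplitudesXZ, of_apply, Fin.sum_univ_two, star_add, star_sub, star_mul']
  ring

theorem harmony_monogamy_general (ψ : Fin 2 × Fin 2 × Fin 2 → ℂ)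
    (ρXY : Matrix (Fin 2 × Fin 2) (Fin 2 × Fin 2) ℂ)
    (hρXY : ρXY = Matrix.of fun p q => ∑ k, ψ (p.1, p.2, k) * star (ψ (q.1, q.2, k)))
    (ρXZ : Matrix (Fin 2 × Fin 2) (Fin 2 × Fin 2) ℂ)
    (hρXZ : ρXZ = Matrix.of fun p q => ∑ j, ψ (p.1, j, p.2) * star (ψ (q.1, j, q.2)))
    (ρX : Matrix (Fin 2) (Fin 2) ℂ)
    (hρX : ρX = Matrix.of fun i i' => ∑ j, ∑ k, ψ (i, j, k) * star (ψ (i', j, k))) :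
    harmony ρXY + harmony ρXZ ≤ (4 * ρX.det.re) ^ 2 := by
  have hXY : ρXY = amplitudesXY ψ * (amplitudesXY ψ)ᴴ := hρXY.trans (of_sum_mul_star _)
  have hXZ : ρXZ = amplitudesXZ ψ * (amplitudesXZ ψ)ᴴ := hρXZ.trans (of_sum_mul_star _)
  set QXY := spinFlipGram (amplitudesXY ψ)
  set QXZ := spinFlipGram (amplitudesXZ ψ)
  have hsum : (QXYᴴ * QXY).trace.re + (QXZᴴ * QXZ).trace.re = 4 * ρX.det.re := by
    have h := trace_spinFlipGram_amplitudesXY_add_amplitudesXZ ψ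
    rw [← hρX] at h
    simpa using congrArg Complex.re h
  have hXY_nonneg := re_trace_conjTranspose_mul_self_nonneg QXY
  have hXZ_nonneg := re_trace_conjTranspose_mul_self_nonneg QXZ
  rw [hXY, hXZ, ← hsum]
  calc _ ≤ (QXYᴴ * QXY).trace.re ^ 2 + (QXZᴴ * QXZ).trace.re ^ 2 :=
        add_le_add (harmony_mul_conjTranspose_le _) (harmony_mul_conjTranspose_le _)
    _ ≤ _ := by nlinarith

/-- For a pure 3-qubit state `ψ` (a unit vector in `ℂ²⊗ℂ²⊗ℂ² ≅ ℂ⁸`)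
with reduced density matrices `ρ_XY`, `ρ_XZ`, `ρ_X` given by partial traces, the
monogamy inequality `H(ρ_XY) + H(ρ_XZ) ≤ (4 det ρ_X)²` holds. -/
theorem harmony_monogamy (ψ : Fin 2 × Fin 2 × Fin 2 → ℂ)
    (hψ : ∑ p, Complex.normSq (ψ p) = 1)
    (ρXY : Matrix (Fin 2 × Fin 2) (Fin 2 × Fin 2) ℂ)
    (hρXY : ρXY = Matrix.of fun p q => ∑ k, ψ (p.1, p.2, k) * star (ψ (q.1, q.2, k)))
    (ρXZ : Matrix (Fin 2 × Fin 2) (Fin 2 × Fin 2) ℂ)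
    (hρXZ : ρXZ = Matrix.of fun p q => ∑ j, ψ (p.1, j, p.2) * star (ψ (q.1, j, q.2)))
    (ρX : Matrix (Fin 2) (Fin 2) ℂ)
    (hρX : ρX = Matrix.of fun i i' => ∑ j, ∑ k, ψ (i, j, k) * star (ψ (i', j, k))) :
    harmony ρXY + harmony ρXZ ≤ (4 * ρX.det.re) ^ 2 :=
  harmony_monogamy_general ψ ρXY hρXY ρXZ hρXZ ρX hρX
end

section
/- Let ψ = (a, c, d, b) ∈ ℂ⁴ be a unit vector representing the pure 2-qubit state a|00⟩ + c|01⟩ + d|10⟩ + b|11⟩, let ρ = ψψ†, and let ρ_A be the 2×2 reduced density matrix with entries (ρ_A)_{i,i'} = Σ_j ψ_{ij} ψ*_{i'j}. Then the concurrence C(ρ) = √(4 det ρ_A) equals the fourth root of the harmony: C(ρ) = H(ρ)^{1/4}, i.e., (4 det ρ_A)² = H(ρ). -/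
open Matrix Kronecker Complex ComplexOrder

/-! For a pure state `ρ = ψψ†` the spin flip is again pure, `ρ̃ = ψ̃ψ̃†` with
`ψ̃ = (σy ⊗ σy) ψ*`, so `ρρ̃` has rank one
and trace `t = |⟨ψ, ψ̃⟩|²`; hence `tr((ρρ̃)²) = t²` and `det ρ = 0`, giving `H(ρ) = t²`.
Writing the amplitudes as a matrix `Ψ`, one has `⟨ψ, ψ̃⟩ = -2 conj(det Ψ)` and `ρ_A = ΨΨ†`,
so `4 det ρ_A = 4 |det Ψ|² = t`. -/

section RankOne

variable {n R : Type*} [Fintype n]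

theorem trace_vecMulVec_mul_self [CommSemiring R] (u v : n → R) :
    (vecMulVec u v * vecMulVec u v).trace = (vecMulVec u v).trace ^ 2 := by
  rw [vecMulVec_mul_vecMulVec, trace_vecMulVec, trace_vecMulVec, dotProduct_smul, smul_eq_mul,
    dotProduct_comm v u, sq]

theorem trace_vecMulVec_star_mul_vecMulVec_star (ψ φ : n → ℂ) :
    (vecMulVec ψ (star ψ) * vecMulVec φ (star φ)).trace = normSq (star ψ ⬝ᵥ φ) := by
  rw [vecMulVec_mul_vecMulVec, trace_vecMulVec, dotProduct_smul, smul_eq_mul, dotProduct_star,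
    dotProduct_comm φ, ← mul_conj]
  rfl

end RankOne

theorem sigYY_isHermitian : sigYY.IsHermitian := by
  have hY : pauliYᴴ = pauliY := by
    ext i j; fin_cases i <;> fin_cases j <;> simp [pauliY]
  rw [IsHermitian, sigYY, conjTranspose_kronecker, hY]

noncomputable def spinFlipVec (ψ : Fin 2 × Fin 2 → ℂ) : Fin 2 × Fin 2 → ℂ := sigYY *ᵥ star ψ

theorem spinFlip_vecMulVec_star (ψ : Fin 2 × Fin 2 → ℂ) :
    spinFlip (vecMulVec ψ (star ψ)) = vecMulVec (spinFlipVec ψ) (star (spinFlipVec ψ)) := by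
  have hconj : (vecMulVec ψ (star ψ)).map (starRingEnd ℂ) = vecMulVec (star ψ) ψ := by
    ext i j; simp [vecMulVec_apply]
  rw [spinFlip, hconj, mul_vecMulVec, vecMulVec_mul, spinFlipVec, star_mulVec,
    sigYY_isHermitian.eq, star_star]

theorem harmony_vecMulVec_star (ψ : Fin 2 × Fin 2 → ℂ) :
    harmony (vecMulVec ψ (star ψ)) = normSq (star ψ ⬝ᵥ spinFlipVec ψ) ^ 2 := by
  set t := normSq (star ψ ⬝ᵥ spinFlipVec ψ)
  set ρ := vecMulVec ψ (star ψ)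
  have htrace : (ρ * spinFlip ρ).trace = t := by
    rw [spinFlip_vecMulVec_star, trace_vecMulVec_star_mul_vecMulVec_star]
  have htrace_sq : (ρ * spinFlip ρ * (ρ * spinFlip ρ)).trace = (t : ℂ) ^ 2 := by
    rw [← htrace, spinFlip_vecMulVec_star, vecMulVec_mul_vecMulVec, trace_vecMulVec_mul_self]
  have hdet : ρ.det = 0 := det_vecMulVec ψ (star ψ)
  rw [harmony, htrace_sq, htrace, hdet, ← ofReal_pow, ofReal_re, ofReal_re, zero_re]
  rw [show 2 * t ^ 2 - t ^ 2 - 8 * 0 = t ^ 2 by ring]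
  exact max_eq_right (sq_nonneg t)

section TwoQubitAmplitudes

variable (Ψ : Matrix (Fin 2) (Fin 2) ℂ)

theorem star_dotProduct_spinFlipVec :
    star (fun p => Ψ p.1 p.2) ⬝ᵥ spinFlipVec (fun p => Ψ p.1 p.2) = -2 * star Ψ.det := by
  simp [spinFlipVec, dotProduct, mulVec, sigYY, pauliY, Fintype.sum_prod_type, Fin.sum_univ_two,
    det_fin_two]
  ring

theorem det_partialTrace_eq_normSq_det :
    (of fun i i' => ∑ j, Ψ i j * star (Ψ i' j)).det = normSq Ψ.det := by
  have h : (of fun i i' => ∑ j, Ψ i j * star (Ψ i' j)) = Ψ * Ψᴴ := by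
    ext i i'; simp [mul_apply]
  rw [h, det_mul, det_conjTranspose, star_def, mul_conj]

end TwoQubitAmplitudes

theorem concurrence_eq_harmony_pow_quarter_general (a b c d : ℂ)
    (ψ : Fin 2 × Fin 2 → ℂ) (hψ : ψ = fun p => !![a, c; d, b] p.1 p.2)
    (ρ : Matrix (Fin 2 × Fin 2) (Fin 2 × Fin 2) ℂ)
    (hρ : ρ = Matrix.vecMulVec ψ (star ψ))
    (ρA : Matrix (Fin 2) (Fin 2) ℂ)
    (hρA : ρA = Matrix.of fun i i' => ∑ j, ψ (i, j) * star (ψ (i', j))) :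
    (4 * ρA.det) ^ 2 = (harmony ρ : ℂ) := by
  subst hψ hρ hρA
  dsimp only
  rw [harmony_vecMulVec_star, star_dotProduct_spinFlipVec, det_partialTrace_eq_normSq_det]
  simp only [map_mul, normSq_neg, normSq_ofNat, star_def, normSq_conj]
  push_cast
  ring

/-- For a pure 2-qubit state `ψ = a|00⟩ + c|01⟩ + d|10⟩ + b|11⟩`
(a unit vector) with `ρ = ψψ†` and reduced density matrix
`(ρ_A)_{i,i'} = Σ_j ψ_{ij} ψ*_{i'j}`, the concurrence `C(ρ) = √(4 det ρ_A)` is the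
fourth root of the harmony, i.e. `(4 det ρ_A)² = H(ρ)`. -/
theorem concurrence_eq_harmony_pow_quarter (a b c d : ℂ)
    (hunit : Complex.normSq a + Complex.normSq b + Complex.normSq c
      + Complex.normSq d = 1)
    (ψ : Fin 2 × Fin 2 → ℂ) (hψ : ψ = fun p => !![a, c; d, b] p.1 p.2)
    (ρ : Matrix (Fin 2 × Fin 2) (Fin 2 × Fin 2) ℂ)
    (hρ : ρ = Matrix.vecMulVec ψ (star ψ))
    (ρA : Matrix (Fin 2) (Fin 2) ℂ)
    (hρA : ρA = Matrix.of fun i i' => ∑ j, ψ (i, j) * star (ψ (i', j))) :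
    (4 * ρA.det) ^ 2 = (harmony ρ : ℂ) :=
  concurrence_eq_harmony_pow_quarter_general a b c d ψ hψ ρ hρ ρA hρA
end
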